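/- Assume P is uniformly elliptic and i.i.d. If there exists a probability measure Q on Ω which is invariant with respect to the point of view of the particle and which is not mutually singular with P, then there exists a probability measure Q̃ on Ω which is invariant with respect to the point of view of the particle and which is equivalent (mutually absolutely continuous) to P. -/

import Mathlib

open MeasureTheory Filter
open scoped ENNReal

noncomputable section

namespace RWRE

/-- sites of the lattice `ℤ^d`. -/
abbrev Site (d : ℕ) := Fin d → ℤ

/-- index set for the `2d` nearest-neighbour steps: `(i, true) ↦ e_i`, `(i, false) ↦ -e_i`. -/
abbrev StepIdx (d : ℕ) := Fin d × Bool

/-- the signed unit vector corresponding to a step index. -/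
def stepVec {d : ℕ} (s : StepIdx d) : Site d :=
  fun j => if j = s.1 then (if s.2 then 1 else -1) else 0

/-- probability vectors on the `2d` nearest-neighbour steps. -/
abbrev EnvAt (d : ℕ) := {p : StepIdx d → ℝ // (∀ s, 0 ≤ p s) ∧ ∑ s, p s = 1}

/-- the space of environments `Ω = (M_d)^{ℤ^d}`. -/
abbrev Env (d : ℕ) := Site d → EnvAt d

/-- the space of trajectories. -/
abbrev Path (d : ℕ) := ℕ → Site d

/-- the shift of the environment by `x`. -/
def shift {d : ℕ} (x : Site d) (ω : Env d) : Env d := fun y => ω (x + y)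

/-- transition probability in environment `ω` from site `y` by increment `v`. -/
def envP {d : ℕ} (ω : Env d) (y v : Site d) : ℝ≥0∞ :=
  ∑ s : StepIdx d, if v = stepVec s then ENNReal.ofReal ((ω y).1 s) else 0

/-- `μ` is the quenched law of the walk started at `x` in the environment `ω`: a
probability measure on path space whose cylinder probabilities are the products of
the transition probabilities of `ω`. -/
def IsQuenched {d : ℕ} (ω : Env d) (x : Site d) (μ : Measure (Path d)) : Prop :=
  IsProbabilityMeasure μ ∧
    ∀ (n : ℕ) (γ : ℕ → Site d),
      μ {f | ∀ i ≤ n, f i = γ i} =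
        (if γ 0 = x then 1 else 0) *
          ∏ i ∈ Finset.range n, envP ω (γ i) (γ (i + 1) - γ i)

/-- `Pq` is a measurable family of quenched laws. -/
def IsQuenchedFamily {d : ℕ} (Pq : Env d → Site d → Measure (Path d)) : Prop :=
  (∀ ω x, IsQuenched ω x (Pq ω x)) ∧
    ∀ (x : Site d) (A : Set (Path d)), MeasurableSet A →
      Measurable fun ω => Pq ω x A

/-- the annealed probability `ℙ^x(A) = ∫ P_ω^x(A) dP(ω)` of a path event. -/
def ann {d : ℕ} (P : Measure (Env d)) (Pq : Env d → Site d → Measure (Path d))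
    (x : Site d) (A : Set (Path d)) : ℝ≥0∞ :=
  ∫⁻ ω, Pq ω x A ∂P

/-- the annealed expectation `𝔼^x[g]` of a real path functional. -/
def annE {d : ℕ} (P : Measure (Env d)) (Pq : Env d → Site d → Measure (Path d))
    (x : Site d) (g : Path d → ℝ) : ℝ :=
  ∫ ω, (∫ f, g f ∂(Pq ω x)) ∂P

/-- `P` is an i.i.d. measure on the space of environments: its finite-dimensional
marginals are products of a fixed single-site probability measure. -/
def IsIID {d : ℕ} (P : Measure (Env d)) : Prop :=
  ∃ ν : Measure (EnvAt d), IsProbabilityMeasure ν ∧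
    ∀ (s : Finset (Site d)) (B : Site d → Set (EnvAt d)),
      (∀ x, MeasurableSet (B x)) →
        P {ω | ∀ x ∈ s, ω x ∈ B x} = ∏ x ∈ s, ν (B x)

/-- uniform ellipticity of `P`. -/
def UniformlyElliptic {d : ℕ} (P : Measure (Env d)) : Prop :=
  ∃ η : ℝ, 0 < η ∧ ∀ s : StepIdx d, P {ω : Env d | (ω 0).1 s < η} = 0

/-- a lattice point, viewed as a real vector. -/
def toR {d : ℕ} (x : Site d) : Fin d → ℝ := fun i => (x i : ℝ)

/-- inner product of a lattice point with a real direction. -/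
def dotR {d : ℕ} (x : Site d) (ℓ : Fin d → ℝ) : ℝ := ∑ i, (x i : ℝ) * ℓ i

/-- the euclidean norm of a real vector. -/
def norm2R {d : ℕ} (ℓ : Fin d → ℝ) : ℝ := Real.sqrt (∑ i, ℓ i ^ 2)

/-- the event `{T_L^{(-ℓ)} < T_L^{(ℓ)}}` that the walk reaches level `L` in
direction `-ℓ` strictly before reaching level `L` in direction `ℓ`. -/
def backtrackEvent {d : ℕ} (ℓ : Fin d → ℝ) (L : ℝ) : Set (Path d) :=
  {f | ∃ n, L ≤ dotR (f n) (-ℓ) ∧ ∀ m ≤ n, dotR (f m) ℓ < L}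

/-- condition `(T_γ)` in the direction `ℓ₀`. -/
def CondTAt {d : ℕ} (P : Measure (Env d)) (Pq : Env d → Site d → Measure (Path d))
    (γ : ℝ) (ℓ₀ : Fin d → ℝ) : Prop :=
  ∃ ε : ℝ, 0 < ε ∧ ∀ ℓ : Fin d → ℝ, norm2R ℓ = 1 → norm2R (ℓ - ℓ₀) < ε →
    ∃ C : ℝ, ∀ L : ℝ, 0 < L →
      ann P Pq 0 (backtrackEvent ℓ L) ≤ ENNReal.ofReal (C * Real.exp (-(L ^ γ)))

/-- condition `(T_γ)` in some direction. -/
def CondT {d : ℕ} (P : Measure (Env d)) (Pq : Env d → Site d → Measure (Path d))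
    (γ : ℝ) : Prop :=
  ∃ ℓ₀ : Fin d → ℝ, norm2R ℓ₀ = 1 ∧ CondTAt P Pq γ ℓ₀

/-- condition `(𝒫)`: condition `(T_γ)` holds for some `γ ∈ (0,1)` in some direction. -/
def CondP {d : ℕ} (P : Measure (Env d)) (Pq : Env d → Site d → Measure (Path d)) : Prop :=
  ∃ γ : ℝ, 0 < γ ∧ γ < 1 ∧ CondT P Pq γ

/-- condition `(𝒫)` in a given direction. -/
def CondPAt {d : ℕ} (P : Measure (Env d)) (Pq : Env d → Site d → Measure (Path d))
    (ℓ₀ : Fin d → ℝ) : Prop :=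
  ∃ γ : ℝ, 0 < γ ∧ γ < 1 ∧ CondTAt P Pq γ ℓ₀

/-- `Q` is invariant with respect to the point of view of the particle. -/
def InvariantPOV {d : ℕ} (Q : Measure (Env d)) : Prop :=
  ∀ g : Env d → ℝ, Measurable g → (∃ C : ℝ, ∀ ω, |g ω| ≤ C) →
    ∫ ω, (∑ s : StepIdx d, (ω 0).1 s * g (shift (stepVec s) ω)) ∂Q = ∫ ω, g ω ∂Q

/-- superpolynomial decay: `g N = N^{-ξ(1)}`. -/
def Superpoly (g : ℕ → ℝ) : Prop :=
  ∀ k : ℕ, Tendsto (fun N : ℕ => (N : ℝ) ^ k * g N) atTop (nhds 0)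

/-- the first coordinate `⟨x, e₁⟩` of a lattice point. -/
def firstCoord {d : ℕ} (x : Fin d → ℤ) : ℤ := if h : 0 < d then x ⟨0, h⟩ else 0

/-- the first coordinate `⟨ℓ, e₁⟩` of a real vector. -/
def firstCoordR {d : ℕ} (ℓ : Fin d → ℝ) : ℝ := if h : 0 < d then ℓ ⟨0, h⟩ else 0

/-- the first standard basis vector, as a real direction. -/
def e1R (d : ℕ) : Fin d → ℝ := fun i => if (i : ℕ) = 0 then 1 else 0

/-- `R_k(N) = ⌊exp((log log N)^{k+1})⌋`. -/
def Rk (k N : ℕ) : ℕ := ⌊Real.exp (Real.log (Real.log (N : ℝ)) ^ (k + 1))⌋₊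

/-- the `ℓ¹`-norm of a lattice point. -/
def norm1 {d : ℕ} (x : Site d) : ℤ := ∑ i, |x i|

/-- the parallelogram `𝒫(z,N)` (relative to the asymptotic direction `ϑ`). -/
def para {d : ℕ} (ϑ : Fin d → ℝ) (z : Site d) (N : ℕ) : Set (Site d) :=
  {x | |firstCoord (x - z)| < (N : ℤ) ^ 2 ∧
    ∀ i, |((x - z) i : ℝ) - (firstCoord (x - z) : ℝ) / firstCoordR ϑ * ϑ i|
      < (N : ℝ) * (Rk 5 N : ℝ)}

/-- the middle third `𝒫̃(z,N)` of the parallelogram. -/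
def paraMid {d : ℕ} (ϑ : Fin d → ℝ) (z : Site d) (N : ℕ) : Set (Site d) :=
  {x | 3 * |firstCoord (x - z)| < (N : ℤ) ^ 2 ∧
    ∀ i, 3 * |((x - z) i : ℝ) - (firstCoord (x - z) : ℝ) / firstCoordR ϑ * ϑ i|
      < (N : ℝ) * (Rk 5 N : ℝ)}

/-- the boundary `∂𝒫(z,N)`. -/
def paraBdry {d : ℕ} (ϑ : Fin d → ℝ) (z : Site d) (N : ℕ) : Set (Site d) :=
  {x | x ∉ para ϑ z N ∧ ∃ y ∈ para ϑ z N, norm1 (x - y) = 1}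

/-- the right boundary `∂⁺𝒫(z,N)`. -/
def paraBdryPlus {d : ℕ} (ϑ : Fin d → ℝ) (z : Site d) (N : ℕ) : Set (Site d) :=
  {x | x ∈ paraBdry ϑ z N ∧ firstCoord (x - z) = (N : ℤ) ^ 2}

/-- the walk hits the set `A`. -/
def hits {d : ℕ} (A : Set (Site d)) (f : Path d) : Prop := ∃ n, f n ∈ A

/-- the hitting time `T_A` of a set of sites. -/
def hitTime {d : ℕ} (A : Set (Site d)) (f : Path d) : ℕ := sInf {n | f n ∈ A}

/-- the hyperplane `H_M = {x : ⟨x,e₁⟩ = M}`. -/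
def hyper {d : ℕ} (M : ℤ) : Set (Site d) := {x | firstCoord x = M}

/-- the event that the walk hits `A`, at a time belonging to `I`, and in a point of `Δ`. -/
def exitEvent {d : ℕ} (A Δ : Set (Site d)) (I : Set ℕ) : Set (Path d) :=
  {f | hits A f ∧ f (hitTime A f) ∈ Δ ∧ hitTime A f ∈ I}

/-- the `d`-dimensional cube with corner `a` and side length `L`. -/
def cube {d : ℕ} (a : Site d) (L : ℕ) : Set (Site d) :=
  {x | ∀ i, a i ≤ x i ∧ x i < a i + (L : ℤ)}

/-- the same cube, as a finite set. -/
def cubeF {d : ℕ} (a : Site d) (L : ℕ) : Finset (Site d) :=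
  Fintype.piFinset fun i => Finset.Ico (a i) (a i + (L : ℤ))

/-- a `(d-1)`-dimensional cube of side length `L` inside the hyperplane `H_m`. -/
def cubeHyp {d : ℕ} (m : ℤ) (a : Site d) (L : ℕ) : Set (Site d) :=
  {x | firstCoord x = m ∧ ∀ i : Fin d, (i : ℕ) ≠ 0 → a i ≤ x i ∧ x i < a i + (L : ℤ)}

/-- the time interval `[t, t + L)`. -/
def interval (t L : ℕ) : Set ℕ := {n | t ≤ n ∧ n < t + L}

/-- `S` is the set of corners of a partition of `ℤ^d` into cubes of side length `L`. -/
def IsCubePartition {d : ℕ} (L : ℕ) (S : Set (Site d)) : Prop :=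
  (∀ x : Site d, ∃ a ∈ S, x ∈ cube a L) ∧
    ∀ a ∈ S, ∀ b ∈ S, a ≠ b → Disjoint (cube a L) (cube b L)

/-- `t` is a regeneration time of the path `f` in direction `e₁`. -/
def IsRegen {d : ℕ} (f : Path d) (t : ℕ) : Prop :=
  (∀ s < t, firstCoord (f s) < firstCoord (f t)) ∧
    firstCoord (f t) < firstCoord (f (t + 1)) ∧
    ∀ s, t + 1 < s → firstCoord (f (t + 1)) < firstCoord (f s)

/-- the `k`-th regeneration time `τ_k` (with the convention `τ₀ = 0`). -/
def regTime {d : ℕ} (f : Path d) : ℕ → ℕ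
  | 0 => 0
  | k + 1 => sInf {t | regTime f k < t ∧ IsRegen f t}

/-- the event `B_N` that each of the first `N²` regeneration gaps is at most `R(N)`. -/
def BN {d : ℕ} (N : ℕ) : Set (Path d) :=
  {f | ∀ k, 1 ≤ k → k ≤ N ^ 2 → regTime f k - regTime f (k - 1) ≤ Rk 1 N}

/-- `ϑ` is the asymptotic direction `lim Xₙ/‖Xₙ‖₂` of the walk, annealed a.s. -/
def DirSpeed {d : ℕ} (P : Measure (Env d)) (Pq : Env d → Site d → Measure (Path d))
    (ϑ : Fin d → ℝ) : Prop :=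
  ann P Pq 0 {f | ¬ Tendsto (fun n => fun i => toR (f n) i / norm2R (toR (f n)))
    atTop (nhds ϑ)} = 0

/-- the σ-algebra generated by the environment in the half space `⟨z,e₁⟩ ≤ m`. -/
def sigmaUpTo (d : ℕ) (m : ℤ) : MeasurableSpace (Env d) :=
  MeasurableSpace.comap
    (fun ω => (fun z : {z : Site d // firstCoord z ≤ m} => ω z.1)) inferInstance

end RWRE

/-!
Write `Q = Qₛ + f • P` for the Lebesgue decomposition of `Q` with respect to `P`. Invariance of
`Q` says that `Q` is a fixed point of the map `stepLaw` sending the law of the environment to its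
law after one step of the walk. Since `P` is shift invariant, `stepLaw` preserves absolute
continuity with respect to `P`, and it preserves total mass, so it also fixes `f • P`. Uniform
ellipticity then makes `{f = 0}` invariant, up to `P`-null sets, under every step and hence under
all of `ℤ^d`. Translations are mixing for the product measure `P`, so this set has probability
`0` or `1`, and `1` is excluded because `Q` is not singular to `P`. Hence `f > 0` `P`-a.s., and
`f • P`, normalised, is the required measure.
-/

open ProbabilityTheory
open scoped symmDiff

section Bernoulli

variable {ι X : Type*} [AddGroup ι] [MeasurableSpace X] {ν : Measure X} [IsProbabilityMeasure ν]

theorem measurePreserving_infinitePi_addLeft (x : ι) :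
    MeasurePreserving (fun (ω : ι → X) y => ω (x + y))
      (Measure.infinitePi fun _ => ν) (Measure.infinitePi fun _ => ν) := by
  refine ⟨by fun_prop, ?_⟩
  convert Measure.infinitePi_map_piCongrLeft (fun _ : ι => ν) (Equiv.addLeft (-x)) using 2
  ext ω y
  change _ = Equiv.piCongrLeft (fun _ => X) (Equiv.addLeft (-x)) ω y
  rw [Equiv.piCongrLeft_apply, eq_rec_constant]
  simp

theorem exists_disjoint_image_addLeft [Infinite ι] [DecidableEq ι] (s : Finset ι) :
    ∃ z, Disjoint s (s.image (z + ·)) := by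
  obtain ⟨z, hz⟩ := Infinite.exists_notMem_finset ((s ×ˢ s).image fun p => p.1 - p.2)
  refine ⟨z, Finset.disjoint_left.2 fun y hy hy' => hz ?_⟩
  obtain ⟨x, hx, rfl⟩ := Finset.mem_image.1 hy'
  exact Finset.mem_image.2 ⟨(z + x, x), Finset.mem_product.2 ⟨hy, hx⟩, add_sub_cancel_right z x⟩

theorem infinitePi_cylinder_inter_preimage_addLeft {s : Finset ι} {S : Set (s → X)}
    [DecidableEq ι] (hS : MeasurableSet S) {z : ι} (hz : Disjoint s (s.image (z + ·))) :
    Measure.infinitePi (fun _ => ν)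
        (cylinder s S ∩ (fun (ω : ι → X) y => ω (z + y)) ⁻¹' cylinder s S) =
      Measure.infinitePi (fun _ => ν) (cylinder s S) ^ 2 := by
  set μ := Measure.infinitePi fun _ : ι => ν
  set t := s.image (z + ·)
  have hindep : IndepFun (fun ω (i : s) => ω i) (fun ω (j : t) => ω j) μ :=
    (iIndepFun_infinitePi (X := fun _ => id) fun _ => measurable_id).indepFun_finset s t hz
      fun i => measurable_pi_apply i
  let S' : Set (t → X) := (fun g (i : s) => g ⟨z + i, Finset.mem_image_of_mem _ i.2⟩) ⁻¹' S
  have hS' : MeasurableSet S' := (by fun_prop : Measurable _) hS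
  calc μ (cylinder s S ∩ (fun (ω : ι → X) y => ω (z + y)) ⁻¹' cylinder s S)
      = μ ((fun ω (i : s) => ω i) ⁻¹' S ∩ (fun ω (j : t) => ω j) ⁻¹' S') := rfl
    _ = μ (cylinder s S) * μ ((fun (ω : ι → X) y => ω (z + y)) ⁻¹' cylinder s S) :=
        hindep.measure_inter_preimage_eq_mul S S' hS hS'
    _ = μ (cylinder s S) ^ 2 := by
        rw [(measurePreserving_infinitePi_addLeft z).measure_preimage
          (hS.cylinder s).nullMeasurableSet, sq]

/-- By invariance `A ∩ τ_z⁻¹ A` has measure `μ A`, and by independence `B ∩ τ_z⁻¹ B` has measure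
`μ B ^ 2`; the two sets differ by at most `2 μ (B ∆ A)`. -/
theorem abs_measureReal_sub_sq_le_of_ae_invariant {A : Set (ι → X)} (hA : MeasurableSet A)
    [DecidableEq ι] {s : Finset ι} {S : Set (s → X)} (hS : MeasurableSet S) {z : ι}
    (hz : Disjoint s (s.image (z + ·)))
    (hAz : (fun (ω : ι → X) y => ω (z + y)) ⁻¹' A =ᵐ[Measure.infinitePi fun _ => ν] A) :
    |(Measure.infinitePi fun _ => ν).real A - (Measure.infinitePi fun _ => ν).real A ^ 2| ≤
      4 * (Measure.infinitePi fun _ => ν).real (cylinder (α := fun _ => X) s S ∆ A) := by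
  set μ := Measure.infinitePi fun _ : ι => ν
  set τ := fun (ω : ι → X) y => ω (z + y)
  set B := cylinder (α := fun _ => X) s S
  have hτ : MeasurePreserving τ μ μ := measurePreserving_infinitePi_addLeft z
  have hB : MeasurableSet B := hS.cylinder s
  have hAA : μ.real (A ∩ τ ⁻¹' A) = μ.real A := by
    rw [measureReal_congr ((ae_eq_refl A).inter hAz), Set.inter_self]
  have hBB : μ.real (B ∩ τ ⁻¹' B) = μ.real B ^ 2 := by
    simp only [measureReal_def, infinitePi_cylinder_inter_preimage_addLeft hS hz,
      ENNReal.toReal_pow, μ, τ, B]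
  have hsymm : μ.real ((A ∩ τ ⁻¹' A) ∆ (B ∩ τ ⁻¹' B)) ≤ 2 * μ.real (B ∆ A) := by
    have hsub : (A ∩ τ ⁻¹' A) ∆ (B ∩ τ ⁻¹' B) ⊆ (B ∆ A) ∪ τ ⁻¹' (B ∆ A) := fun ω => by
      simp only [Set.mem_symmDiff, Set.mem_inter_iff, Set.mem_union, Set.mem_preimage]
      tauto
    calc μ.real ((A ∩ τ ⁻¹' A) ∆ (B ∩ τ ⁻¹' B))
        ≤ μ.real (B ∆ A) + μ.real (τ ⁻¹' (B ∆ A)) :=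
          (measureReal_mono hsub).trans (measureReal_union_le _ _)
      _ = 2 * μ.real (B ∆ A) := by
          rw [hτ.measureReal_preimage (hB.symmDiff hA).nullMeasurableSet]; ring
  have hBA : |μ.real B - μ.real A| ≤ μ.real (B ∆ A) :=
    abs_measureReal_sub_le_measureReal_symmDiff hB.nullMeasurableSet hA.nullMeasurableSet
  have hsq : |μ.real B ^ 2 - μ.real A ^ 2| ≤ 2 * μ.real (B ∆ A) := by
    have hsum : |μ.real B + μ.real A| ≤ 2 := by
      rw [abs_of_nonneg (by positivity)]
      linarith [measureReal_le_one (μ := μ) (s := B), measureReal_le_one (μ := μ) (s := A)]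
    calc |μ.real B ^ 2 - μ.real A ^ 2| = |μ.real B - μ.real A| * |μ.real B + μ.real A| := by
          rw [← abs_mul]; ring_nf
      _ ≤ μ.real (B ∆ A) * 2 := by gcongr
      _ = 2 * μ.real (B ∆ A) := mul_comm _ _
  have hmix : |μ.real A - μ.real B ^ 2| ≤ 2 * μ.real (B ∆ A) := by
    rw [← hAA, ← hBB]
    exact (abs_measureReal_sub_le_measureReal_symmDiff
      (hA.inter (hτ.measurable hA)).nullMeasurableSet
      (hB.inter (hτ.measurable hB)).nullMeasurableSet).trans hsymm
  calc |μ.real A - μ.real A ^ 2| ≤ |μ.real A - μ.real B ^ 2| + |μ.real B ^ 2 - μ.real A ^ 2| :=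
        abs_sub_le _ _ _
    _ ≤ 4 * μ.real (B ∆ A) := by linarith

theorem infinitePi_measure_eq_zero_or_one_of_ae_invariant [Infinite ι] {A : Set (ι → X)}
    (hA : MeasurableSet A)
    (h : ∀ x : ι, (fun (ω : ι → X) y => ω (x + y)) ⁻¹' A =ᵐ[Measure.infinitePi fun _ => ν] A) :
    Measure.infinitePi (fun _ => ν) A = 0 ∨ Measure.infinitePi (fun _ => ν) A = 1 := by
  classical
  set μ := Measure.infinitePi fun _ : ι => ν
  have hsmall : ∀ ε : ℝ, 0 < ε → |μ.real A - μ.real A ^ 2| ≤ 4 * ε := by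
    intro ε hε
    obtain ⟨B, hBcyl, hBA⟩ := exists_measure_symmDiff_lt_of_generateFrom_isSetRing (μ := μ)
      (isSetRing_measurableCylinders (α := fun _ : ι => X))
      ⟨{Set.univ}, Set.countable_singleton _,
        by simpa using univ_mem_measurableCylinders (fun _ : ι => X), by simp⟩
      generateFrom_measurableCylinders.symm hA (ENNReal.ofReal_pos.2 hε)
    obtain ⟨s, S, hS, rfl⟩ := (mem_measurableCylinders B).1 hBcyl
    obtain ⟨z, hz⟩ := exists_disjoint_image_addLeft s
    calc |μ.real A - μ.real A ^ 2| ≤ 4 * μ.real (cylinder (α := fun _ => X) s S ∆ A) :=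
          abs_measureReal_sub_sq_le_of_ae_invariant hA hS hz (h z)
      _ ≤ 4 * ε := by
          gcongr
          exact ENNReal.toReal_le_of_le_ofReal hε.le hBA.le
  have hidem : μ.real A = μ.real A ^ 2 := by
    by_contra hne
    have hpos : 0 < |μ.real A - μ.real A ^ 2| := abs_pos.2 (sub_ne_zero.2 hne)
    linarith [hsmall (|μ.real A - μ.real A ^ 2| / 8) (by positivity)]
  rcases mul_eq_zero.1 (by linear_combination hidem : μ.real A * (1 - μ.real A) = 0) with h0 | h1
  · exact Or.inl ((measureReal_eq_zero_iff).1 h0)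
  · exact Or.inr (ENNReal.toReal_eq_one_iff _ |>.1 (by rw [← measureReal_def]; linarith))

end Bernoulli

theorem MeasureTheory.Measure.le_withDensity_rnDeriv_of_le {α : Type*}
    [MeasurableSpace α] {μ ν ρ : Measure α} [ν.HaveLebesgueDecomposition μ] (hle : ρ ≤ ν)
    (hac : ρ ≪ μ) : ρ ≤ μ.withDensity (ν.rnDeriv μ) := by
  obtain ⟨S, -, hνS, hμS⟩ := Measure.mutuallySingular_singularPart ν μ
  refine Measure.le_iff.2 fun A hA => ?_
  calc ρ A = ρ (A ∩ S) := (measure_inter_conull (hac hμS)).symm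
    _ ≤ ν (A ∩ S) := Measure.le_iff'.1 hle _
    _ = μ.withDensity (ν.rnDeriv μ) (A ∩ S) := by
        conv_lhs => rw [← Measure.singularPart_add_rnDeriv ν μ]
        rw [Measure.add_apply, measure_mono_null Set.inter_subset_right hνS, zero_add]
    _ ≤ μ.withDensity (ν.rnDeriv μ) A := measure_mono Set.inter_subset_left

namespace RWRE

variable {d : ℕ}

theorem measurable_shift (x : Site d) : Measurable (shift (d := d) x) :=
  measurable_pi_lambda _ fun y => measurable_pi_apply (x + y)

theorem shift_zero : shift (0 : Site d) = id := by
  funext ω z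
  simp [shift]

theorem preimage_shift_add (x y : Site d) (A : Set (Env d)) :
    shift (x + y) ⁻¹' A = shift x ⁻¹' (shift y ⁻¹' A) := by
  ext ω
  change (fun z => ω (x + y + z)) ∈ A ↔ (fun z => ω (x + (y + z))) ∈ A
  simp only [add_assoc]

theorem closure_range_stepVec : AddSubgroup.closure (Set.range (stepVec (d := d))) = ⊤ := by
  classical
  refine eq_top_iff.2 fun x _ => ?_
  rw [pi_eq_sum_univ x]
  refine AddSubgroup.sum_mem _ fun i _ =>
    AddSubgroup.zsmul_mem _ (AddSubgroup.subset_closure (Set.mem_range.2 ⟨(i, true), ?_⟩)) _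
  funext j
  simp [stepVec, eq_comm]

theorem shift_preimage_ae_eq_of_stepVec {P : Measure (Env d)}
    (hP : ∀ x, MeasurePreserving (shift x) P P) {A : Set (Env d)}
    (h : ∀ s, shift (stepVec s) ⁻¹' A =ᵐ[P] A) (x : Site d) : shift x ⁻¹' A =ᵐ[P] A := by
  let G : AddSubgroup (Site d) :=
    { carrier := {x | shift x ⁻¹' A =ᵐ[P] A}
      add_mem' := fun {x y} hx hy => by
        rw [Set.mem_ofPred_eq, preimage_shift_add]
        exact ((hP x).quasiMeasurePreserving.preimage_ae_eq hy).trans hx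
      zero_mem' := by
        rw [Set.mem_ofPred_eq, shift_zero, Set.preimage_id]
        rfl
      neg_mem' := fun {x} hx => by
        have := (hP (-x)).quasiMeasurePreserving.preimage_ae_eq hx
        rw [← preimage_shift_add, neg_add_cancel, shift_zero, Set.preimage_id] at this
        exact this.symm }
  have hG : AddSubgroup.closure (Set.range stepVec) ≤ G :=
    (AddSubgroup.closure_le G).2 (Set.range_subset_iff.2 h)
  exact hG (closure_range_stepVec ▸ AddSubgroup.mem_top x)

theorem IsIID.exists_eq_infinitePi {P : Measure (Env d)} (h : IsIID P) :
    ∃ ν : Measure (EnvAt d), IsProbabilityMeasure ν ∧ P = Measure.infinitePi fun _ => ν := by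
  obtain ⟨ν, hν, hP⟩ := h
  exact ⟨ν, hν, Measure.eq_infinitePi _ fun s B hB => hP s B hB⟩

theorem IsIID.measurePreserving_shift {P : Measure (Env d)} (h : IsIID P) (x : Site d) :
    MeasurePreserving (shift x) P P := by
  obtain ⟨ν, hν, rfl⟩ := h.exists_eq_infinitePi
  exact measurePreserving_infinitePi_addLeft x

theorem IsIID.measure_eq_zero_or_one_of_ae_invariant {P : Measure (Env d)} (hd : 1 ≤ d)
    (h : IsIID P) {A : Set (Env d)} (hA : MeasurableSet A)
    (hinv : ∀ x, shift x ⁻¹' A =ᵐ[P] A) : P A = 0 ∨ P A = 1 := by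
  obtain ⟨ν, hν, rfl⟩ := h.exists_eq_infinitePi
  have : Nonempty (Fin d) := ⟨⟨0, hd⟩⟩
  exact infinitePi_measure_eq_zero_or_one_of_ae_invariant hA hinv

theorem measurable_stepProb (s : StepIdx d) : Measurable fun ω : Env d => (ω 0).1 s :=
  (measurable_pi_apply s).comp (measurable_subtype_coe.comp (measurable_pi_apply 0))

/-- The law of the environment seen from the walk after one step, when the environment is
initially distributed according to `μ`. -/
def stepLaw (μ : Measure (Env d)) : Measure (Env d) :=
  ∑ s : StepIdx d, (μ.withDensity fun ω => ENNReal.ofReal ((ω 0).1 s)).map (shift (stepVec s))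

theorem stepLaw_apply (μ : Measure (Env d)) {A : Set (Env d)} (hA : MeasurableSet A) :
    stepLaw μ A =
      ∑ s : StepIdx d, ∫⁻ ω in shift (stepVec s) ⁻¹' A, ENNReal.ofReal ((ω 0).1 s) ∂μ := by
  simp only [stepLaw, Measure.coe_finsetSum, Finset.sum_apply,
    Measure.map_apply (measurable_shift _) hA, withDensity_apply _ (measurable_shift _ hA)]

theorem stepLaw_univ (μ : Measure (Env d)) : stepLaw μ Set.univ = μ Set.univ := by
  have hsum : ∀ ω : Env d, ∑ s, ENNReal.ofReal ((ω 0).1 s) = 1 := fun ω => by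
    rw [← ENNReal.ofReal_sum_of_nonneg fun s _ => (ω 0).2.1 s, (ω 0).2.2, ENNReal.ofReal_one]
  rw [stepLaw_apply μ MeasurableSet.univ]
  simp only [Set.preimage_univ, Measure.restrict_univ]
  rw [← lintegral_finsetSum _ fun s _ => (measurable_stepProb s).ennreal_ofReal]
  simp [hsum]

instance (μ : Measure (Env d)) [IsFiniteMeasure μ] : IsFiniteMeasure (stepLaw μ) :=
  ⟨by rw [stepLaw_univ]; exact measure_lt_top μ _⟩

theorem stepLaw_mono {μ ν : Measure (Env d)} (h : μ ≤ ν) : stepLaw μ ≤ stepLaw ν :=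
  Measure.le_iff.2 fun A hA => by
    simp only [stepLaw_apply _ hA]
    gcongr

theorem stepLaw_smul (c : ℝ≥0∞) (μ : Measure (Env d)) : stepLaw (c • μ) = c • stepLaw μ := by
  simp only [stepLaw, withDensity_smul_measure, Measure.map_smul, Finset.smul_sum]

theorem stepLaw_absolutelyContinuous {μ P : Measure (Env d)}
    (hP : ∀ x, MeasurePreserving (shift x) P P) (h : μ ≪ P) : stepLaw μ ≪ P := by
  refine Measure.AbsolutelyContinuous.mk fun A hA hPA => ?_
  rw [stepLaw_apply μ hA]
  refine Finset.sum_eq_zero fun s _ => setLIntegral_measure_zero _ _ (h ?_)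
  rwa [(hP _).measure_preimage hA.nullMeasurableSet]

theorem integral_stepLaw (μ : Measure (Env d)) [IsFiniteMeasure μ] {g : Env d → ℝ}
    (hg : Measurable g) (hbdd : ∃ C, ∀ ω, |g ω| ≤ C) :
    ∫ ω, g ω ∂stepLaw μ = ∫ ω, ∑ s : StepIdx d, (ω 0).1 s * g (shift (stepVec s) ω) ∂μ := by
  obtain ⟨C, hC⟩ := hbdd
  have hint : ∀ ρ : Measure (Env d), ρ ≤ stepLaw μ → Integrable g ρ := fun ρ hρ =>
    (Integrable.of_bound hg.aestronglyMeasurable C (ae_of_all _ hC)).mono_measure hρ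
  have hterm : ∀ s : StepIdx d,
      Integrable (fun ω => (ω 0).1 s * g (shift (stepVec s) ω)) μ := fun s =>
    (Integrable.of_bound (hg.comp (measurable_shift _)).aestronglyMeasurable C
      (ae_of_all _ fun ω => hC _)).bdd_mul (measurable_stepProb s).aestronglyMeasurable
      (ae_of_all _ fun ω => by
        rw [Real.norm_of_nonneg ((ω 0).2.1 s)]
        exact (Finset.single_le_sum (fun t _ => (ω 0).2.1 t) (Finset.mem_univ s)).trans
          (ω 0).2.2.le)
  rw [stepLaw, integral_finsetSum_measure fun s _ => hint _ ?_, integral_finsetSum _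
    fun s _ => hterm s]
  · refine Finset.sum_congr rfl fun s _ => ?_
    rw [integral_map (measurable_shift _).aemeasurable hg.aestronglyMeasurable,
      integral_withDensity_eq_integral_toReal_smul (measurable_stepProb s).ennreal_ofReal
        (ae_of_all _ fun _ => ENNReal.ofReal_lt_top)]
    simp only [smul_eq_mul]
    congr 1 with ω
    rw [ENNReal.toReal_ofReal ((ω 0).2.1 s)]
  · exact Finset.single_le_sum (f := fun s : StepIdx d => (μ.withDensity fun ω =>
      ENNReal.ofReal ((ω 0).1 s)).map (shift (stepVec s))) (fun _ _ => Measure.zero_le _) ‹_›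

theorem invariantPOV_iff_stepLaw_eq (Q : Measure (Env d)) [IsFiniteMeasure Q] :
    InvariantPOV Q ↔ stepLaw Q = Q := by
  refine ⟨fun h => Measure.ext fun A hA => ?_, fun h g hg hbdd => by
    rw [← integral_stepLaw Q hg hbdd, h]⟩
  have hind : Measurable (A.indicator (1 : Env d → ℝ)) := measurable_one.indicator hA
  have hbdd : ∃ C, ∀ ω, |A.indicator (1 : Env d → ℝ) ω| ≤ C :=
    ⟨1, fun ω => by by_cases hω : ω ∈ A <;> simp [hω]⟩
  have hreal := (integral_stepLaw Q hind hbdd).trans (h _ hind hbdd)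
  rw [integral_indicator_one hA, integral_indicator_one hA] at hreal
  exact (ENNReal.toReal_eq_toReal_iff' (measure_ne_top _ _) (measure_ne_top _ _)).1 hreal

theorem stepLaw_withDensity_rnDeriv {P Q : Measure (Env d)} [IsFiniteMeasure Q]
    [Q.HaveLebesgueDecomposition P] (hP : ∀ x, MeasurePreserving (shift x) P P)
    (hQ : stepLaw Q = Q) :
    stepLaw (P.withDensity (Q.rnDeriv P)) = P.withDensity (Q.rnDeriv P) :=
  Measure.eq_of_le_of_measure_univ_eq
    (Measure.le_withDensity_rnDeriv_of_le
      ((stepLaw_mono (Measure.withDensity_rnDeriv_le Q P)).trans hQ.le)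
      (stepLaw_absolutelyContinuous hP (withDensity_absolutelyContinuous _ _)))
    (stepLaw_univ _)

/-- Every step has probability at least `η`, so `stepLaw μ A ≥ η • μ (shift e ⁻¹' A)`. -/
theorem measure_preimage_shift_eq_zero_of_stepLaw_eq {μ P : Measure (Env d)}
    (hUE : UniformlyElliptic P) (hμP : μ ≪ P) (hμ : stepLaw μ = μ) {A : Set (Env d)} (hA : MeasurableSet A)
    (hA0 : μ A = 0) (s : StepIdx d) : μ (shift (stepVec s) ⁻¹' A) = 0 := by
  obtain ⟨η, hη, hηP⟩ := hUE
  have hterm : ∫⁻ ω in shift (stepVec s) ⁻¹' A, ENNReal.ofReal ((ω 0).1 s) ∂μ = 0 := by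
    rw [← hμ, stepLaw_apply μ hA] at hA0
    exact Finset.sum_eq_zero_iff.1 hA0 s (Finset.mem_univ s)
  have hzero : ∀ᵐ ω ∂μ.restrict (shift (stepVec s) ⁻¹' A), ENNReal.ofReal ((ω 0).1 s) = 0 :=
    (lintegral_eq_zero_iff (measurable_stepProb s).ennreal_ofReal).1 hterm
  have hlarge : ∀ᵐ ω ∂μ.restrict (shift (stepVec s) ⁻¹' A), η ≤ (ω 0).1 s :=
    ae_restrict_of_ae (hμP.ae_le (ae_iff.2 (by simpa only [not_le] using hηP s)))
  have hfalse : ∀ᵐ _ ∂μ.restrict (shift (stepVec s) ⁻¹' A), False := by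
    filter_upwards [hzero, hlarge] with ω h0 hle
    rw [ENNReal.ofReal_eq_zero] at h0
    linarith
  simpa using ae_eq_bot.1 (eventually_false_iff_eq_bot.1 hfalse)

theorem shift_preimage_ae_eq_rnDeriv_zeroSet {P Q : Measure (Env d)} [IsProbabilityMeasure P]
    [IsFiniteMeasure Q] (hUE : UniformlyElliptic P) (hP : ∀ x, MeasurePreserving (shift x) P P)
    (hQ : stepLaw Q = Q) (s : StepIdx d) :
    shift (stepVec s) ⁻¹' {ω | Q.rnDeriv P ω = 0} =ᵐ[P] {ω | Q.rnDeriv P ω = 0} := by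
  set A := {ω | Q.rnDeriv P ω = 0}
  have hf := (Measure.measurable_rnDeriv Q P).aemeasurable (μ := P)
  have hA : MeasurableSet A := Measure.measurable_rnDeriv Q P (measurableSet_singleton 0)
  have hnull : P.withDensity (Q.rnDeriv P) (shift (stepVec s) ⁻¹' A) = 0 :=
    measure_preimage_shift_eq_zero_of_stepLaw_eq hUE (withDensity_absolutelyContinuous _ _)
      (stepLaw_withDensity_rnDeriv hP hQ) hA
      ((withDensity_apply_eq_zero' hf).2 (measure_mono_null (fun ω hω => hω.1 hω.2)
        measure_empty)) s
  have hle : shift (stepVec s) ⁻¹' A ≤ᵐ[P] A := by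
    rw [ae_le_set, ← (withDensity_apply_eq_zero' hf).1 hnull]
    congr 1
    ext ω
    simp only [Set.mem_sdiff, Set.mem_inter_iff, Set.mem_ofPred_eq, A]
    tauto
  exact ae_eq_of_ae_subset_of_measure_ge hle
    ((hP _).measure_preimage hA.nullMeasurableSet).ge
    ((measurable_shift _) hA).nullMeasurableSet (measure_ne_top _ _)

/-- If an invariant measure not mutually singular with `P` exists,
then an invariant measure equivalent to `P` exists. -/
theorem statement2 (d : ℕ) (hd : 1 ≤ d)
    (P : Measure (Env d)) [IsProbabilityMeasure P]
    (hUE : UniformlyElliptic P) (hIID : IsIID P)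
    (Q : Measure (Env d)) (hQ : IsProbabilityMeasure Q) (hQinv : InvariantPOV Q)
    (hNS : ¬ Measure.MutuallySingular Q P) :
    ∃ Q' : Measure (Env d),
      IsProbabilityMeasure Q' ∧ InvariantPOV Q' ∧ Q' ≪ P ∧ P ≪ Q' := by
  have hP := hIID.measurePreserving_shift
  have hK : stepLaw Q = Q := (invariantPOV_iff_stepLaw_eq Q).1 hQinv
  set A := {ω | Q.rnDeriv P ω = 0}
  have hA : MeasurableSet A := Measure.measurable_rnDeriv Q P (measurableSet_singleton 0)
  have hPA : P A = 0 := by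
    refine (hIID.measure_eq_zero_or_one_of_ae_invariant hd hA (shift_preimage_ae_eq_of_stepVec hP
      (shift_preimage_ae_eq_rnDeriv_zeroSet hUE hP hK))).resolve_right fun h1 => hNS ?_
    exact (Measure.rnDeriv_eq_zero Q P).1 (mem_ae_iff.2 ((prob_compl_eq_zero_iff hA).2 h1))
  set Qa := P.withDensity (Q.rnDeriv P)
  have hPQa : P ≪ Qa := withDensity_absolutelyContinuous'
    (Measure.measurable_rnDeriv Q P).aemeasurable (measure_eq_zero_iff_ae_notMem.1 hPA)
  have : NeZero Qa := ⟨fun h0 => by simpa [h0] using hPQa (Measure.measure_univ_eq_zero.2 h0)⟩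
  refine ⟨(Qa Set.univ)⁻¹ • Qa, inferInstance, ?_, ?_, ?_⟩
  · rw [invariantPOV_iff_stepLaw_eq, stepLaw_smul, stepLaw_withDensity_rnDeriv hP hK]
  · exact Measure.smul_absolutelyContinuous.trans (withDensity_absolutelyContinuous _ _)
  · exact hPQa.trans
      (Measure.absolutelyContinuous_smul (ENNReal.inv_ne_zero.2 (measure_ne_top _ _)))
end RWRE
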